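/- arXiv:1607.04034 — 3 statements merged into one kernel-verified Lean document; each statement's English description precedes it below -/
import Mathlib

section
/- Let λ be an (n,m)-hook partition (λ_{n+1} ≤ m), let δ = 2m − 2n, and define b_j = max(λ_j − j − δ/2 + 1, 0) for 1 ≤ j ≤ n and a_i = max(λ^t_i − i + δ/2, 0) for 1 ≤ i ≤ m, where λ^t is the transpose partition. Then for every s with 0 ≤ s ≤ min(m,n) − 1, if a_{m−s} > 0 then b_{n−s} > 0. -/
/-! `a_{m-s} > 0` says that more than `n - s` rows of `λ` have length at least `m - s`;
since `λ` is weakly decreasing, row `n - s` is among them, which is `b_{n-s} > 0`. -/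

theorem Antitone.le_apply_succ_of_lt_ncard {f : ℕ → ℕ} (hf : Antitone f) {i j : ℕ}
    (h : j < {k : ℕ | 1 ≤ k ∧ i ≤ f k}.ncard) : i ≤ f (j + 1) := by
  by_contra! hlt
  have hsub : {k : ℕ | 1 ≤ k ∧ i ≤ f k} ⊆ Set.Icc 1 j := fun k ⟨hk1, hk⟩ =>
    ⟨hk1, not_lt.1 fun hjk => (hlt.trans_le' (hf hjk)).not_ge hk⟩
  have hcard := Set.ncard_le_ncard hsub (Set.finite_Icc 1 j)
  rw [Set.ncard_Icc_nat] at hcard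
  omega

theorem stmt_2_general (m n : ℕ) (f ft : ℕ → ℕ)
    (hmono : ∀ i j : ℕ, i ≤ j → f j ≤ f i)
    (hft : ∀ i : ℕ, ft i = Set.ncard {k : ℕ | 1 ≤ k ∧ i ≤ f k}) :
    ∀ s : ℕ, s + 1 ≤ min m n →
      0 < max ((ft (m - s) : ℤ) - (m - s) + ((m : ℤ) - n)) 0 →
      0 < max ((f (n - s) : ℤ) - (n - s) - ((m : ℤ) - n) + 1) 0 := by
  intro s hs ha
  simp only [lt_max_iff, lt_irrefl, or_false] at ha ⊢
  have hcount : n - s < ft (m - s) := by omega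
  rw [hft] at hcount
  have hrow : m - s ≤ f (n - s) :=
    (Antitone.le_apply_succ_of_lt_ncard hmono hcount).trans (hmono _ _ (Nat.le_succ _))
  omega

/-- Let `λ` be an `(n,m)`-hook partition, `δ = 2m − 2n`,
`b_j = max(λ_j − j − δ/2 + 1, 0)` and `a_i = max(λᵗ_i − i + δ/2, 0)`.
Then for `0 ≤ s ≤ min(m,n) − 1`, if `a_{m−s} > 0` then `b_{n−s} > 0`. -/
theorem stmt_2 (m n : ℕ) (f ft : ℕ → ℕ)
    (hmono : ∀ i j : ℕ, i ≤ j → f j ≤ f i)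
    (hfin : ∃ N : ℕ, ∀ i : ℕ, N ≤ i → f i = 0)
    (hhook : f (n + 1) ≤ m)
    (hft : ∀ i : ℕ, ft i = Set.ncard {k : ℕ | 1 ≤ k ∧ i ≤ f k}) :
    ∀ s : ℕ, s + 1 ≤ min m n →
      0 < max ((ft (m - s) : ℤ) - (m - s) + ((m : ℤ) - n)) 0 →
      0 < max ((f (n - s) : ℤ) - (n - s) - ((m : ℤ) - n) + 1) 0 :=
  stmt_2_general m n f ft hmono hft
end

section
/- Stacking two Brauer diagrams is well-defined: given two perfect matchings D_1, D_2 on {1,…,d} ⊔ {1',…,d'} (bottom and top points), the relation on bottom points of D_1 and top points of D_2 obtained by following paths through the middle points yields again a perfect matching on the 2d external points, and every middle point lies either on such a path or on a closed cycle. -/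
/-!
Follow a path through the two diagrams as a sequence of states `(a, b) : α × Bool`, where `b`
says which matching is used next. One step is the permutation `walk = flipBool * reflect`, where
`reflect` applies `σ₁` or `σ₂` according to `b` and keeps `b`. Both factors are involutions, so
`reflect` conjugates `walk` to its inverse, hence acts as a reflection on every cycle of `walk`
through one of its fixed points: it fixes at most two states of such a cycle, and exactly two when
the cycle has even length, which every cycle has since `walk` flips `b`. The states fixed by `reflect` are the external points (a top
point with `b = true`, a bottom point with `b = false`), and the points reachable from an external
point `x` are the first coordinates of the cycle through its fixed state; so exactly one external
point other than `x` is reachable. A middle point either reaches an external point or has a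
periodic orbit under `σ₂ ∘ σ₁` consisting of middle points.
-/

open Equiv Function

theorem Int.dvd_sub_of_dvd_two_mul {N a b : ℤ} (ha : N ∣ 2 * a) (ha' : ¬ N ∣ a)
    (hb : N ∣ 2 * b) (hb' : ¬ N ∣ b) : N ∣ a - b := by
  obtain ⟨u, hu⟩ := ha
  obtain ⟨v, hv⟩ := hb
  rcases Int.even_or_odd u with ⟨w, rfl⟩ | ⟨w, rfl⟩
  · exact absurd ⟨w, by linarith⟩ ha'
  rcases Int.even_or_odd v with ⟨w', rfl⟩ | ⟨w', rfl⟩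
  · exact absurd ⟨w', by linarith⟩ hb'
  exact ⟨w - w', by linarith⟩

namespace Equiv.Perm

variable {β : Type*} {f τ : Perm β}

theorem apply_zpow_apply_of_conj_eq_inv (hτ : τ * f * τ⁻¹ = f⁻¹) (k : ℤ) (x : β) :
    τ ((f ^ k) x) = (f ^ (-k)) (τ x) := by
  rw [zpow_neg, ← inv_zpow, ← hτ, conj_zpow]
  simp

theorem apply_zpow_eq_self_iff (hτ : τ * f * τ⁻¹ = f⁻¹) {p : β} (hp : τ p = p) (k : ℤ) :
    τ ((f ^ k) p) = (f ^ k) p ↔ (f ^ (2 * k)) p = p := by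
  rw [apply_zpow_apply_of_conj_eq_inv hτ, hp, zpow_neg, Perm.inv_eq_iff_eq, two_mul, zpow_add,
    Perm.mul_apply, eq_comm]

theorem SameCycle.apply_of_conj_eq_inv (hτ : τ * f * τ⁻¹ = f⁻¹) {p q : β} (hp : τ p = p)
    (hq : f.SameCycle p q) : f.SameCycle p (τ q) := by
  obtain ⟨k, rfl⟩ := hq
  exact ⟨-k, by rw [apply_zpow_apply_of_conj_eq_inv hτ, hp]⟩

theorem eq_of_sameCycle_of_conj_eq_inv (hτ : τ * f * τ⁻¹ = f⁻¹) {p q q' : β} (hp : τ p = p)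
    (hpq : f.SameCycle p q) (hpq' : f.SameCycle p q') (hq : τ q = q) (hq' : τ q' = q')
    (hqp : q ≠ p) (hq'p : q' ≠ p) : q = q' := by
  obtain ⟨a, rfl⟩ := hpq
  obtain ⟨b, rfl⟩ := hpq'
  have period_dvd {k : ℤ} : (f ^ k) p = p ↔ (MulAction.period f p : ℤ) ∣ k := by
    rw [← Perm.smul_def, MulAction.zpow_smul_eq_iff_period_dvd]
  have hab : (MulAction.period f p : ℤ) ∣ a - b :=
    Int.dvd_sub_of_dvd_two_mul (period_dvd.1 ((apply_zpow_eq_self_iff hτ hp a).1 hq))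
      (mt period_dvd.2 hqp) (period_dvd.1 ((apply_zpow_eq_self_iff hτ hp b).1 hq'))
      (mt period_dvd.2 hq'p)
  rw [← add_sub_cancel b a, zpow_add, Perm.mul_apply, period_dvd.2 hab]

theorem exists_sameCycle_ne_of_conj_eq_inv (hτ : τ * f * τ⁻¹ = f⁻¹) {p : β} (hp : τ p = p)
    (hpos : 0 < MulAction.period f p) (heven : Even (MulAction.period f p)) :
    ∃ q, f.SameCycle p q ∧ q ≠ p ∧ τ q = q := by
  obtain ⟨m, hm⟩ := heven
  have period_dvd {k : ℕ} : (f ^ k) p = p ↔ MulAction.period f p ∣ k := by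
    rw [← Perm.smul_def, MulAction.pow_smul_eq_iff_period_dvd]
  refine ⟨(f ^ (m : ℤ)) p, ⟨m, rfl⟩, fun h => ?_, ?_⟩
  · rw [zpow_natCast, period_dvd] at h
    exact absurd (Nat.le_of_dvd (by omega) h) (by omega)
  · rw [apply_zpow_eq_self_iff hτ hp, ← Nat.cast_two, ← Nat.cast_mul, zpow_natCast, period_dvd]
    exact ⟨1, by omega⟩

end Equiv.Perm

namespace BrauerStacking

section Paths

variable {α : Type*} {σ₁ σ₂ : α → α}

def Adj (σ₁ σ₂ : α → α) (a b : α) : Prop := σ₁ a = b ∨ σ₂ a = b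

theorem reflTransGen_adj_iterate (a : α) (n : ℕ) :
    Relation.ReflTransGen (Adj σ₁ σ₂) a ((σ₂ ∘ σ₁)^[n] a) := by
  induction n with
  | zero => exact .refl
  | succ n ih =>
    rw [iterate_succ_apply']
    exact (ih.tail (Or.inl rfl)).tail (Or.inr rfl)

theorem exists_reflTransGen_adj_or_isPeriodicPt [Finite α] (hσ : Injective (σ₂ ∘ σ₁))
    (P : α → Prop) (z : α) :
    (∃ x, P x ∧ Relation.ReflTransGen (Adj σ₁ σ₂) z x) ∨
      ∃ k, 0 < k ∧ (σ₂ ∘ σ₁)^[k] z = z ∧ ∀ j ≤ k, ¬ P ((σ₂ ∘ σ₁)^[j] z) := by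
  by_cases h : ∃ j, P ((σ₂ ∘ σ₁)^[j] z)
  · obtain ⟨j, hj⟩ := h
    exact .inl ⟨_, hj, reflTransGen_adj_iterate z j⟩
  · obtain ⟨k, hk, hper⟩ := hσ.mem_periodicPts z
    exact .inr ⟨k, hk, hper, fun j _ => not_exists.1 h j⟩


def reflect (hσ₁ : Involutive σ₁) (hσ₂ : Involutive σ₂) : Perm (α × Bool) :=
  Involutive.toPerm (fun p => (if p.2 then σ₁ p.1 else σ₂ p.1, p.2)) fun ⟨a, b⟩ => by
    cases b <;> simp [hσ₁ a, hσ₂ a]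

def flipBool : Perm (α × Bool) :=
  Involutive.toPerm (Prod.map id not) fun ⟨a, b⟩ => by simp

def walk (hσ₁ : Involutive σ₁) (hσ₂ : Involutive σ₂) : Perm (α × Bool) :=
  flipBool * reflect hσ₁ hσ₂

section Walk

variable (hσ₁ : Involutive σ₁) (hσ₂ : Involutive σ₂)

@[simp]
theorem reflect_apply (a : α) (b : Bool) :
    reflect hσ₁ hσ₂ (a, b) = (if b then σ₁ a else σ₂ a, b) := rfl

@[simp]
theorem walk_apply (a : α) (b : Bool) :
    walk hσ₁ hσ₂ (a, b) = (if b then σ₁ a else σ₂ a, !b) := rfl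

theorem reflect_mul_walk_mul_inv :
    reflect hσ₁ hσ₂ * walk hσ₁ hσ₂ * (reflect hσ₁ hσ₂)⁻¹ = (walk hσ₁ hσ₂)⁻¹ := by
  have hr : (reflect hσ₁ hσ₂)⁻¹ = reflect hσ₁ hσ₂ := Involutive.toPerm_symm _
  have hf : (flipBool : Perm (α × Bool))⁻¹ = flipBool := Involutive.toPerm_symm _
  rw [walk, mul_inv_rev, hf, mul_assoc, mul_assoc, mul_inv_cancel, mul_one, hr]

theorem even_period_walk (p : α × Bool) : Even (MulAction.period (walk hσ₁ hσ₂) p) := by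
  have hsnd : Semiconj Prod.snd (walk hσ₁ hσ₂) not := fun ⟨a, b⟩ => rfl
  have hper := congrArg Prod.snd (MulAction.pow_period_smul (walk hσ₁ hσ₂) p)
  rw [Perm.smul_def, Perm.coe_pow, (hsnd.iterate_right _).eq] at hper
  by_contra hodd
  rw [Bool.involutive_not.iterate_odd (Nat.not_even_iff_odd.1 hodd)] at hper
  exact Bool.not_ne_self _ hper

theorem adj_fst_walk (p : α × Bool) : Adj σ₁ σ₂ p.1 (walk hσ₁ hσ₂ p).1 := by
  obtain ⟨a, _ | _⟩ := p <;> simp [Adj]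

theorem reflTransGen_adj_of_sameCycle [Finite α] {p q : α × Bool}
    (h : (walk hσ₁ hσ₂).SameCycle p q) : Relation.ReflTransGen (Adj σ₁ σ₂) p.1 q.1 := by
  obtain ⟨n, rfl⟩ := h.exists_nat_pow_eq
  clear h
  induction n with
  | zero => exact .refl
  | succ n ih => rw [pow_succ', Perm.mul_apply]; exact ih.tail (adj_fst_walk hσ₁ hσ₂ _)

theorem sameCycle_walk_mk_of_sameCycle_walk_mk {s : α × Bool} (hs : reflect hσ₁ hσ₂ s = s)
    {a : α} {b : Bool} (h : (walk hσ₁ hσ₂).SameCycle s (a, b)) (c : Bool) :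
    (walk hσ₁ hσ₂).SameCycle s (a, c) := by
  have hnot : (walk hσ₁ hσ₂).SameCycle s (a, !b) := by
    have := (h.apply_of_conj_eq_inv (reflect_mul_walk_mul_inv hσ₁ hσ₂) hs).apply_right
    cases b <;> simpa [hσ₁ a, hσ₂ a] using this
  cases b <;> cases c <;> assumption

theorem sameCycle_walk_of_reflTransGen {s : α × Bool} (hs : reflect hσ₁ hσ₂ s = s) {a : α}
    (h : Relation.ReflTransGen (Adj σ₁ σ₂) s.1 a) (b : Bool) :
    (walk hσ₁ hσ₂).SameCycle s (a, b) := by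
  induction h generalizing b with
  | refl => exact sameCycle_walk_mk_of_sameCycle_walk_mk hσ₁ hσ₂ hs (Perm.SameCycle.refl _ _) b
  | @tail a a' _ hadj ih =>
    rcases hadj with rfl | rfl
    · exact sameCycle_walk_mk_of_sameCycle_walk_mk hσ₁ hσ₂ hs (ih true).apply_right b
    · exact sameCycle_walk_mk_of_sameCycle_walk_mk hσ₁ hσ₂ hs (ih false).apply_right b

theorem exists_reflect_eq_self {a : α} (ha : σ₁ a = a ∨ σ₂ a = a) :
    ∃ b, reflect hσ₁ hσ₂ (a, b) = (a, b) := by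
  rcases ha with ha | ha
  · exact ⟨true, by simp [ha]⟩
  · exact ⟨false, by simp [ha]⟩

theorem isFixed_fst_of_reflect_eq_self {p : α × Bool} (hp : reflect hσ₁ hσ₂ p = p) :
    σ₁ p.1 = p.1 ∨ σ₂ p.1 = p.1 := by
  obtain ⟨a, _ | _⟩ := p <;> simp_all

theorem eq_of_reflect_eq_self (hdisj : ∀ a, σ₁ a = a → σ₂ a ≠ a) {p q : α × Bool}
    (hp : reflect hσ₁ hσ₂ p = p) (hq : reflect hσ₁ hσ₂ q = q) (hpq : p.1 = q.1) : p = q := by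
  obtain ⟨a, _ | _⟩ := p <;> obtain ⟨a', _ | _⟩ := q <;> simp_all

end Walk

theorem existsUnique_reflTransGen_adj [Finite α] (hσ₁ : Involutive σ₁) (hσ₂ : Involutive σ₂)
    (hdisj : ∀ a, σ₁ a = a → σ₂ a ≠ a) {x : α} (hx : σ₁ x = x ∨ σ₂ x = x) :
    ∃! y, (σ₁ y = y ∨ σ₂ y = y) ∧ y ≠ x ∧ Relation.ReflTransGen (Adj σ₁ σ₂) x y := by
  have hrev := reflect_mul_walk_mul_inv hσ₁ hσ₂
  obtain ⟨b, hs⟩ := exists_reflect_eq_self hσ₁ hσ₂ hx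
  obtain ⟨t, hst, hts, ht⟩ := Perm.exists_sameCycle_ne_of_conj_eq_inv hrev hs
    (MulAction.period_pos_of_orderOf_pos (orderOf_pos _) _) (even_period_walk hσ₁ hσ₂ _)
  refine ⟨t.1, ⟨isFixed_fst_of_reflect_eq_self hσ₁ hσ₂ ht,
    fun h => hts (eq_of_reflect_eq_self hσ₁ hσ₂ hdisj ht hs h),
    reflTransGen_adj_of_sameCycle hσ₁ hσ₂ hst⟩, ?_⟩
  rintro y ⟨hy, hyx, hxy⟩
  obtain ⟨c, hc⟩ := exists_reflect_eq_self hσ₁ hσ₂ hy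
  have hct := Perm.eq_of_sameCycle_of_conj_eq_inv hrev hs
    (sameCycle_walk_of_reflTransGen hσ₁ hσ₂ hs hxy c) hst hc ht (fun h => hyx congr($h.1)) hts
  exact congr($hct.1)

end Paths


section ThreeRows

variable {d : ℕ} {σ₁ σ₂ : Fin d ⊕ Fin d ⊕ Fin d → Fin d ⊕ Fin d ⊕ Fin d}

theorem forall_ne_inr_inl_iff
    (h₁fix : ∀ t : Fin d, σ₁ (Sum.inr (Sum.inr t)) = Sum.inr (Sum.inr t))
    (h₂fix : ∀ b : Fin d, σ₂ (Sum.inl b) = Sum.inl b)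
    (h₁move : ∀ x, (∀ t : Fin d, x ≠ Sum.inr (Sum.inr t)) → σ₁ x ≠ x)
    (h₂move : ∀ x, (∀ b : Fin d, x ≠ Sum.inl b) → σ₂ x ≠ x) (x : Fin d ⊕ Fin d ⊕ Fin d) :
    (∀ i : Fin d, x ≠ Sum.inr (Sum.inl i)) ↔ σ₁ x = x ∨ σ₂ x = x := by
  rcases x with b | i | t
  · simp [h₂fix]
  · simpa using ⟨h₁move _ (by simp), h₂move _ (by simp)⟩
  · simp [h₁fix]

theorem apply_ne_of_apply_eq_self
    (h₁move : ∀ x, (∀ t : Fin d, x ≠ Sum.inr (Sum.inr t)) → σ₁ x ≠ x)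
    (h₂move : ∀ x, (∀ b : Fin d, x ≠ Sum.inl b) → σ₂ x ≠ x) (x : Fin d ⊕ Fin d ⊕ Fin d)
    (hx : σ₁ x = x) : σ₂ x ≠ x := by
  rcases x with b | i | t
  · exact absurd hx (h₁move _ (by simp))
  · exact absurd hx (h₁move _ (by simp))
  · exact h₂move _ (by simp)

end ThreeRows

end BrauerStacking

open BrauerStacking in
/-- Stacking two Brauer diagrams is well-defined.  Model the `d` bottom points,
`d` middle points and `d` top points as `Fin d ⊕ Fin d ⊕ Fin d`, and the two
perfect matchings `D₁` (on bottom ⊔ middle) and `D₂` (on middle ⊔ top) as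
involutions `σ₁, σ₂` fixing exactly the top resp. bottom points.  Following
alternating paths, every external (non-middle) point is joined to a unique
other external point — so the composite is again a perfect matching on the
`2d` external points — and every middle point either lies on a path to an
external point or on a closed cycle among the middle points. -/
theorem stmt_10 (d : ℕ)
    (σ₁ σ₂ : (Fin d ⊕ Fin d ⊕ Fin d) → (Fin d ⊕ Fin d ⊕ Fin d))
    (h₁inv : ∀ x, σ₁ (σ₁ x) = x)
    (h₂inv : ∀ x, σ₂ (σ₂ x) = x)
    (h₁fix : ∀ t : Fin d, σ₁ (Sum.inr (Sum.inr t)) = Sum.inr (Sum.inr t))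
    (h₂fix : ∀ b : Fin d, σ₂ (Sum.inl b) = Sum.inl b)
    (h₁move : ∀ x, (∀ t : Fin d, x ≠ Sum.inr (Sum.inr t)) → σ₁ x ≠ x)
    (h₂move : ∀ x, (∀ b : Fin d, x ≠ Sum.inl b) → σ₂ x ≠ x) :
    (∀ x : Fin d ⊕ Fin d ⊕ Fin d, (∀ i : Fin d, x ≠ Sum.inr (Sum.inl i)) →
        ∃! y, (∀ i : Fin d, y ≠ Sum.inr (Sum.inl i)) ∧ y ≠ x ∧
          Relation.ReflTransGen (fun a b => σ₁ a = b ∨ σ₂ a = b) x y)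
    ∧ (∀ z : Fin d ⊕ Fin d ⊕ Fin d, (∃ i : Fin d, z = Sum.inr (Sum.inl i)) →
        (∃ x, (∀ i : Fin d, x ≠ Sum.inr (Sum.inl i)) ∧
            Relation.ReflTransGen (fun a b => σ₁ a = b ∨ σ₂ a = b) z x)
        ∨ ∃ k : ℕ, 0 < k ∧ (σ₂ ∘ σ₁)^[k] z = z ∧
            ∀ j ≤ k, ∃ i : Fin d, (σ₂ ∘ σ₁)^[j] z = Sum.inr (Sum.inl i)) := by
  have hext := forall_ne_inr_inl_iff h₁fix h₂fix h₁move h₂move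
  refine ⟨fun x hx => ?_, fun z _ => ?_⟩
  · simp only [hext] at hx ⊢
    exact existsUnique_reflTransGen_adj h₁inv h₂inv (apply_ne_of_apply_eq_self h₁move h₂move) hx
  · refine (exists_reflTransGen_adj_or_isPeriodicPt
      ((Involutive.injective h₂inv).comp (Involutive.injective h₁inv))
      (fun x => ∀ i : Fin d, x ≠ Sum.inr (Sum.inl i)) z).imp_right ?_
    rintro ⟨k, hk, hper, hmid⟩
    exact ⟨k, hk, hper, fun j hj => by simpa using hmid j hj⟩
end

section
/- In the zigzag algebra of type D_∞ defined by the quiver and relations above (vertices 0,1,2,3,…; f_0:0→2, f_1:1→2, f_i:i→i+1 and g's reversed; relations f_{i+1}f_i = 0 = g_i g_{i+1}, g_{i+1}f_{i+1} = f_i g_i, g_0 f_1 = 0 = g_1 f_0, f_0 g_0 = g_1 f_1 = g_2 f_2, f_2 f_0 = 0 = g_0 g_2), for any two distinct vertices i ≠ j the space e_j A e_i is 1-dimensional if i and j are adjacent in the quiver (connected by an arrow) and 0-dimensional otherwise. -/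
/-- Generators of the path algebra of the `D_∞` zigzag quiver: vertex
idempotents `e i`, arrows `f 0 : 0 → 2`, `f 1 : 1 → 2`, `f i : i → i+1`
(`i ≥ 2`), and reversed arrows `g i`. -/
inductive ZGen : Type
  | e (i : ℕ)
  | f (i : ℕ)
  | g (i : ℕ)

/-- The generator `x` as an element of the free algebra. -/
noncomputable def ZX (x : ZGen) : FreeAlgebra ℂ ZGen := FreeAlgebra.ι ℂ x

/-- Target vertex of the arrow `f i` (and source of `g i`). -/
def tgtF (i : ℕ) : ℕ := if i ≤ 1 then 2 else i + 1

/-- Relations defining the path algebra of the quiver modulo the relations of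
Theorem: `e` are orthogonal idempotents, `f i = e_{tgt} f i e_{src}` and
`g i = e_{src} g i e_{tgt}`, together with
`f_{i+1}∘f_i = 0 = g_i∘g_{i+1}`, `g_{i+1}∘f_{i+1} = f_i∘g_i` (for `i ≥ 0`),
`g_0∘f_1 = 0 = g_1∘f_0`, `f_0∘g_0 = g_1∘f_1 = g_2∘f_2`, and
`f_2∘f_0 = 0 = g_0∘g_2`.  Composition is written right-to-left. -/
inductive ZRel : FreeAlgebra ℂ ZGen → FreeAlgebra ℂ ZGen → Prop
  | e_orth (i j : ℕ) (h : i ≠ j) : ZRel (ZX (.e i) * ZX (.e j)) 0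
  | e_idem (i : ℕ) : ZRel (ZX (.e i) * ZX (.e i)) (ZX (.e i))
  | f_norm (i : ℕ) : ZRel (ZX (.e (tgtF i)) * ZX (.f i) * ZX (.e i)) (ZX (.f i))
  | g_norm (i : ℕ) : ZRel (ZX (.e i) * ZX (.g i) * ZX (.e (tgtF i))) (ZX (.g i))
  | ff (i : ℕ) : ZRel (ZX (.f (i + 1)) * ZX (.f i)) 0
  | gg (i : ℕ) : ZRel (ZX (.g i) * ZX (.g (i + 1))) 0
  | gf_fg (i : ℕ) : ZRel (ZX (.g (i + 1)) * ZX (.f (i + 1))) (ZX (.f i) * ZX (.g i))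
  | g0f1 : ZRel (ZX (.g 0) * ZX (.f 1)) 0
  | g1f0 : ZRel (ZX (.g 1) * ZX (.f 0)) 0
  | loop1 : ZRel (ZX (.f 0) * ZX (.g 0)) (ZX (.g 1) * ZX (.f 1))
  | loop2 : ZRel (ZX (.g 1) * ZX (.f 1)) (ZX (.g 2) * ZX (.f 2))
  | f2f0 : ZRel (ZX (.f 2) * ZX (.f 0)) 0
  | g0g2 : ZRel (ZX (.g 0) * ZX (.g 2)) 0

/-- The zigzag algebra of type `D_∞`. -/
abbrev ZA : Type := RingQuot ZRel

noncomputable def ZE (i : ℕ) : ZA := RingQuot.mkAlgHom ℂ ZRel (ZX (.e i))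
noncomputable def ZF (i : ℕ) : ZA := RingQuot.mkAlgHom ℂ ZRel (ZX (.f i))
noncomputable def ZG (i : ℕ) : ZA := RingQuot.mkAlgHom ℂ ZRel (ZX (.g i))

/-- The loop `c_i = g_i f_i` at the vertex `i`. -/
noncomputable def ZC (i : ℕ) : ZA := ZG i * ZF i

/-!
The relations kill every path of length three and identify each surviving path of length two
with a loop `c k`, so `A` is spanned by `1` and the elements `e k`, `f k`, `g k`, `c k`. For
`i ≠ j`, multiplying these by `e j` on the left and `e i` on the right kills all of them except
the arrow from `i` to `j`, if there is one; that arrow is nonzero, as a two-dimensional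
representation of `A` shows.
-/

open Submodule

lemma tgtF_ne_self (a : ℕ) : tgtF a ≠ a := by unfold tgtF; split <;> omega

lemma not_tgtF_eq_and_tgtF_eq (i j : ℕ) : ¬(tgtF i = j ∧ tgtF j = i) := by
  unfold tgtF; split <;> split <;> omega

lemma tgtF_add_two (n : ℕ) : tgtF (n + 2) = n + 3 := by unfold tgtF; split <;> omega

lemma ZRel.mk_eq {x y : FreeAlgebra ℂ ZGen} (h : ZRel x y) :
    RingQuot.mkAlgHom ℂ ZRel x = RingQuot.mkAlgHom ℂ ZRel y :=
  RingQuot.mkAlgHom_rel ℂ h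

lemma ZRel.mk_mul_eq_zero {x y : ZGen} (h : ZRel (ZX x * ZX y) 0) :
    RingQuot.mkAlgHom ℂ ZRel (ZX x) * RingQuot.mkAlgHom ℂ ZRel (ZX y) = 0 := by
  rw [← map_mul, h.mk_eq, map_zero]

lemma ZE_mul_ZE (a b : ℕ) : ZE a * ZE b = if a = b then ZE a else 0 := by
  split_ifs with h
  · subst h; rw [ZE, ← map_mul, (ZRel.e_idem a).mk_eq]
  · rw [ZE, ZE, ← map_mul, (ZRel.e_orth a b h).mk_eq, map_zero]

lemma ZE_mul_ZF_mul_ZE (a : ℕ) : ZE (tgtF a) * ZF a * ZE a = ZF a := by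
  rw [ZE, ZE, ZF, ← map_mul, ← map_mul, (ZRel.f_norm a).mk_eq]

lemma ZE_mul_ZG_mul_ZE (a : ℕ) : ZE a * ZG a * ZE (tgtF a) = ZG a := by
  rw [ZE, ZE, ZG, ← map_mul, ← map_mul, (ZRel.g_norm a).mk_eq]

lemma ZF_mul_ZE_self (a : ℕ) : ZF a * ZE a = ZF a := by
  rw [← ZE_mul_ZF_mul_ZE, mul_assoc, ZE_mul_ZE, if_pos rfl]

lemma ZE_tgtF_mul_ZF (a : ℕ) : ZE (tgtF a) * ZF a = ZF a := by
  rw [← ZE_mul_ZF_mul_ZE, ← mul_assoc, ← mul_assoc, ZE_mul_ZE, if_pos rfl]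

lemma ZG_mul_ZE_tgtF (a : ℕ) : ZG a * ZE (tgtF a) = ZG a := by
  rw [← ZE_mul_ZG_mul_ZE, mul_assoc, ZE_mul_ZE, if_pos rfl]

lemma ZE_mul_ZG_self (a : ℕ) : ZE a * ZG a = ZG a := by
  rw [← ZE_mul_ZG_mul_ZE, ← mul_assoc, ← mul_assoc, ZE_mul_ZE, if_pos rfl]

lemma mul_eq_zero_of_ZE_ne {x y : ZA} {a b : ℕ} (hx : x * ZE a = x) (hy : ZE b * y = y)
    (h : a ≠ b) : x * y = 0 := by
  rw [← hx, ← hy, mul_assoc, ← mul_assoc (ZE a), ZE_mul_ZE, if_neg h, zero_mul, mul_zero]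

lemma ZE_mul_ZF (a b : ℕ) : ZE a * ZF b = if a = tgtF b then ZF b else 0 := by
  split_ifs with h
  · rw [h, ZE_tgtF_mul_ZF]
  · rw [← ZE_mul_ZF_mul_ZE, ← mul_assoc, ← mul_assoc, ZE_mul_ZE, if_neg h, zero_mul, zero_mul]

lemma ZE_mul_ZG (a b : ℕ) : ZE a * ZG b = if a = b then ZG b else 0 := by
  split_ifs with h
  · rw [h, ZE_mul_ZG_self]
  · rw [← ZE_mul_ZG_mul_ZE, ← mul_assoc, ← mul_assoc, ZE_mul_ZE, if_neg h, zero_mul, zero_mul]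

lemma ZF_mul_ZE (a b : ℕ) : ZF a * ZE b = if a = b then ZF a else 0 := by
  split_ifs with h
  · rw [h, ZF_mul_ZE_self]
  · rw [← ZE_mul_ZF_mul_ZE, mul_assoc, ZE_mul_ZE, if_neg h, mul_zero]

lemma ZG_mul_ZE (a b : ℕ) : ZG a * ZE b = if tgtF a = b then ZG a else 0 := by
  split_ifs with h
  · rw [← h, ZG_mul_ZE_tgtF]
  · rw [← ZE_mul_ZG_mul_ZE, mul_assoc, ZE_mul_ZE, if_neg h, mul_zero]

lemma ZF_mul_ZF (a b : ℕ) : ZF a * ZF b = 0 := by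
  by_cases h : a = tgtF b
  · subst h
    obtain _ | _ | n := b
    · exact ZRel.mk_mul_eq_zero ZRel.f2f0
    · exact ZRel.mk_mul_eq_zero (ZRel.ff 1)
    · rw [tgtF_add_two]; exact ZRel.mk_mul_eq_zero (ZRel.ff (n + 2))
  · exact mul_eq_zero_of_ZE_ne (ZF_mul_ZE_self a) (ZE_tgtF_mul_ZF b) h

lemma ZG_mul_ZG (a b : ℕ) : ZG a * ZG b = 0 := by
  by_cases h : tgtF a = b
  · subst h
    obtain _ | _ | n := a
    · exact ZRel.mk_mul_eq_zero ZRel.g0g2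
    · exact ZRel.mk_mul_eq_zero (ZRel.gg 1)
    · rw [tgtF_add_two]; exact ZRel.mk_mul_eq_zero (ZRel.gg (n + 2))
  · exact mul_eq_zero_of_ZE_ne (ZG_mul_ZE_tgtF a) (ZE_mul_ZG_self b) h

lemma ZF_mul_ZG (a b : ℕ) : ZF a * ZG b = if a = b then ZC (a + 1) else 0 := by
  split_ifs with h
  · rw [h, ZC, ZF, ZG, ZG, ZF, ← map_mul, ← map_mul, (ZRel.gf_fg b).mk_eq]
  · exact mul_eq_zero_of_ZE_ne (ZF_mul_ZE_self a) (ZE_mul_ZG_self b) h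

lemma ZG_mul_ZF (a b : ℕ) : ZG a * ZF b = if a = b then ZC a else 0 := by
  split_ifs with h
  · rw [h, ZC]
  by_cases ht : tgtF a = tgtF b
  · have : (a = 0 ∧ b = 1) ∨ (a = 1 ∧ b = 0) := by
      unfold tgtF at ht; split at ht <;> split at ht <;> omega
    rcases this with ⟨rfl, rfl⟩ | ⟨rfl, rfl⟩
    · exact ZRel.mk_mul_eq_zero ZRel.g0f1
    · exact ZRel.mk_mul_eq_zero ZRel.g1f0
  · exact mul_eq_zero_of_ZE_ne (ZG_mul_ZE_tgtF a) (ZE_tgtF_mul_ZF b) ht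

lemma ZC_mul_ZE (a b : ℕ) : ZC a * ZE b = if a = b then ZC a else 0 := by
  rw [ZC, mul_assoc, ZF_mul_ZE, mul_ite, mul_zero]

lemma ZC_mul_ZF (a b : ℕ) : ZC a * ZF b = 0 := by
  rw [ZC, mul_assoc, ZF_mul_ZF, mul_zero]

lemma ZC_mul_ZG (a b : ℕ) : ZC a * ZG b = 0 := by
  rw [ZC, mul_assoc, ZF_mul_ZG]
  split_ifs
  · rw [ZC, ← mul_assoc, ZG_mul_ZG, zero_mul]
  · rw [mul_zero]

lemma ZE_mul_ZC (a b : ℕ) : ZE a * ZC b = if a = b then ZC b else 0 := by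
  rw [ZC, ← mul_assoc, ZE_mul_ZG, ite_mul, zero_mul]

def spanningSet : Set ZA :=
  insert 1 (Set.range ZE ∪ Set.range ZF ∪ Set.range ZG ∪ Set.range ZC)

lemma mul_generator_mem_span {s : ZA} (hs : s ∈ spanningSet) (t : ZGen) :
    s * RingQuot.mkAlgHom ℂ ZRel (ZX t) ∈ span ℂ spanningSet := by
  rcases t with b | b | b <;>
    [change s * ZE b ∈ _; change s * ZF b ∈ _; change s * ZG b ∈ _] <;>
  obtain rfl | ⟨⟨⟨⟨a, rfl⟩ | ⟨a, rfl⟩⟩ | ⟨a, rfl⟩⟩ | ⟨a, rfl⟩⟩ := hs <;>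
  simp only [one_mul, ZE_mul_ZE, ZE_mul_ZF, ZE_mul_ZG, ZF_mul_ZE, ZF_mul_ZF, ZF_mul_ZG, ZG_mul_ZE,
    ZG_mul_ZF, ZG_mul_ZG, ZC_mul_ZE, ZC_mul_ZF, ZC_mul_ZG] <;>
  (try split_ifs) <;> first | exact zero_mem _ | exact subset_span (by simp [spanningSet])

lemma mul_mem_span_spanningSet {v : ZA} (hv : v ∈ span ℂ spanningSet) (x : ZA) :
    v * x ∈ span ℂ spanningSet := by
  obtain ⟨y, rfl⟩ := RingQuot.mkAlgHom_surjective ℂ ZRel x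
  induction y using FreeAlgebra.induction generalizing v with
  | grade0 r =>
    rw [AlgHom.commutes, Algebra.algebraMap_eq_smul_one, mul_smul_comm, mul_one]
    exact smul_mem _ r hv
  | grade1 t =>
    induction hv using span_induction with
    | mem s hs => exact mul_generator_mem_span hs t
    | zero => rw [zero_mul]; exact zero_mem _
    | add x y _ _ hx hy => rw [add_mul]; exact add_mem hx hy
    | smul c x _ hx => rw [smul_mul_assoc]; exact smul_mem _ c hx
  | mul y z hy hz => rw [map_mul, ← mul_assoc]; exact hz (hy hv)
  | add y z hy hz => rw [map_add, mul_add]; exact add_mem (hy hv) (hz hv)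

lemma span_spanningSet_eq_top : span ℂ spanningSet = ⊤ :=
  eq_top_iff'.2 fun x => one_mul x ▸ mul_mem_span_spanningSet (subset_span (Set.mem_insert _ _)) x

noncomputable def arrow (i j : ℕ) : ZA :=
  if tgtF i = j then ZF i else if tgtF j = i then ZG j else 0

lemma arrow_tgtF_left (i : ℕ) : arrow i (tgtF i) = ZF i := if_pos rfl

lemma arrow_tgtF_right (j : ℕ) : arrow (tgtF j) j = ZG j := by
  rw [arrow, if_neg fun h => not_tgtF_eq_and_tgtF_eq j (tgtF j) ⟨rfl, h⟩, if_pos rfl]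

lemma arrow_eq_zero {i j : ℕ} (h : ¬(tgtF i = j ∨ tgtF j = i)) : arrow i j = 0 := by
  rw [arrow, if_neg fun h' => h (.inl h'), if_neg fun h' => h (.inr h')]

lemma ZE_mul_arrow_mul_ZE (i j : ℕ) : ZE j * arrow i j * ZE i = arrow i j := by
  by_cases hF : tgtF i = j
  · rw [← hF, arrow_tgtF_left, ZE_tgtF_mul_ZF, ZF_mul_ZE_self]
  by_cases hG : tgtF j = i
  · rw [← hG, arrow_tgtF_right, ZE_mul_ZG_self, ZG_mul_ZE_tgtF]
  rw [arrow_eq_zero (by tauto), mul_zero, zero_mul]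

lemma ZE_mul_mul_ZE_mem_span_arrow {i j : ℕ} (hij : i ≠ j) (x : ZA) :
    ZE j * x * ZE i ∈ ℂ ∙ arrow i j := by
  have hx : x ∈ span ℂ spanningSet := span_spanningSet_eq_top ▸ mem_top
  induction hx using span_induction with
  | mem s hs =>
    obtain rfl | ⟨⟨⟨⟨a, rfl⟩ | ⟨a, rfl⟩⟩ | ⟨a, rfl⟩⟩ | ⟨a, rfl⟩⟩ := hs <;>
    simp only [mul_one, ZE_mul_ZE, ZE_mul_ZF, ZE_mul_ZG, ZE_mul_ZC, ZF_mul_ZE, ZG_mul_ZE,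
      ZC_mul_ZE, ite_mul, zero_mul] <;>
    split_ifs <;>
    first
      | exact zero_mem _
      | (exfalso; omega)
      | (subst_vars; rw [arrow_tgtF_left]; exact mem_span_singleton_self _)
      | (subst_vars; rw [arrow_tgtF_right]; exact mem_span_singleton_self _)
  | zero => rw [mul_zero, zero_mul]; exact zero_mem _
  | add x y _ _ hx hy => rw [mul_add, add_mul]; exact add_mem hx hy
  | smul c x _ hx => rw [mul_smul_comm, smul_mul_assoc]; exact smul_mem _ c hx

/-- The two-dimensional representation on the vertices `a` and `tgtF a` in which `f a` acts
nontrivially if `forward`, and `g a` does otherwise. -/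
noncomputable def arrowRep (a : ℕ) (forward : Bool) : ZGen → Matrix (Fin 2) (Fin 2) ℂ
  | .e k => if k = a then .single 0 0 1 else if k = tgtF a then .single 1 1 1 else 0
  | .f k => if forward ∧ k = a then .single 1 0 1 else 0
  | .g k => if !forward ∧ k = a then .single 0 1 1 else 0

lemma arrowRep_rel (a : ℕ) (forward : Bool) ⦃x y : FreeAlgebra ℂ ZGen⦄ (h : ZRel x y) :
    FreeAlgebra.lift ℂ (arrowRep a forward) x = FreeAlgebra.lift ℂ (arrowRep a forward) y := by
  cases h <;> cases forward <;>
    simp only [ZX, map_mul, map_zero, FreeAlgebra.lift_ι_apply, arrowRep, Bool.not_true,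
      Bool.not_false, Bool.false_eq_true, true_and, false_and, if_false] <;>
    (try split_ifs) <;>
    (try simp_all [Matrix.single_mul_single_same, Matrix.single_mul_single_of_ne, tgtF_ne_self])

noncomputable def arrowRepHom (a : ℕ) (forward : Bool) : ZA →ₐ[ℂ] Matrix (Fin 2) (Fin 2) ℂ :=
  RingQuot.liftAlgHom ℂ ⟨FreeAlgebra.lift ℂ (arrowRep a forward), arrowRep_rel a forward⟩

lemma ZF_ne_zero (a : ℕ) : ZF a ≠ 0 := by
  intro h
  simpa [ZF, arrowRepHom, ZX, arrowRep] using congr_fun₂ (congrArg (arrowRepHom a true) h) 1 0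

lemma ZG_ne_zero (a : ℕ) : ZG a ≠ 0 := by
  intro h
  simpa [ZG, arrowRepHom, ZX, arrowRep] using congr_fun₂ (congrArg (arrowRepHom a false) h) 0 1

lemma arrow_ne_zero {i j : ℕ} (h : tgtF i = j ∨ tgtF j = i) : arrow i j ≠ 0 := by
  rcases h with rfl | rfl
  · rw [arrow_tgtF_left]; exact ZF_ne_zero i
  · rw [arrow_tgtF_right]; exact ZG_ne_zero j

/-- For distinct vertices `i ≠ j`, the space `e_j A e_i` is 1-dimensional if
`i` and `j` are adjacent in the quiver (connected by an arrow) and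
0-dimensional otherwise. -/
theorem stmt_17 (i j : ℕ) (hij : i ≠ j) :
    Module.finrank ℂ
        (Submodule.span ℂ {x : ZA | ∃ a : ZA, x = ZE j * a * ZE i})
      = if tgtF i = j ∨ tgtF j = i then 1 else 0 := by
  have hcorner : span ℂ {x : ZA | ∃ a : ZA, x = ZE j * a * ZE i} = ℂ ∙ arrow i j := by
    refine le_antisymm (span_le.2 ?_) (span_singleton_le_iff_mem _ _ |>.2 <| subset_span ?_)
    · rintro _ ⟨a, rfl⟩
      exact ZE_mul_mul_ZE_mem_span_arrow hij a
    · exact ⟨arrow i j, (ZE_mul_arrow_mul_ZE i j).symm⟩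
  rw [hcorner]
  split_ifs with hadj
  · exact finrank_span_singleton (arrow_ne_zero hadj)
  · rw [arrow_eq_zero hadj, span_singleton_eq_bot.2 rfl, finrank_bot]
end
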